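/- For every x ∈ ℤ one has V e₁ˣ = e₁^{x+1}, V e₂ˣ = e₂^{x−1}, W e₁ˣ = e₂^{x+1}, and W e₂ˣ = −e₁^{x−1}. In particular, V, W, σ and their inverses preserve the closed subspace of H spanned by the vectors e₁ˣ, e₂ˣ (x ∈ ℤ). -/

import Mathlib

/-!
Since `σ` commutes with `V` and `V*`, the operator `T = π₊V + π₋V*` acts as `V` on the
`+1`-eigenspace of `σ` and as `V*` on the `-1`-eigenspace, and the relations (QW2), (QW3) make `T`
commute with `V`, `W` and `σ`. As `σe = e` and `σ(εe) = -εe`, this gives `Te = Ve`, `T(εe) = We`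
and `T(Vεe) = εe`; pushing these through the powers of `T` yields the formulas for `V` and `W`,
and those for `V* = V⁻¹` and `W* = -W` follow. The closed span is then invariant because it is
the closure of an invariant subspace.
-/

open ContinuousLinearMap Set Submodule

section ZpowOrbit

variable {R M : Type*} [Semiring R] [TopologicalSpace M] [AddCommMonoid M] [Module R M]

def zpowOrbit (u : (M →L[R] M)ˣ) (v : M) (x : ℤ) : M :=
  ((u ^ x : (M →L[R] M)ˣ) : M →L[R] M) v

theorem Commute.apply_apply {A B : M →L[R] M} (h : Commute A B) (v : M) : A (B v) = B (A v) :=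
  DFunLike.congr_fun h.eq v

variable {u : (M →L[R] M)ˣ}

theorem Commute.apply_zpowOrbit {A : M →L[R] M} (h : Commute A u) (v : M) (x : ℤ) :
    A (zpowOrbit u v x) = zpowOrbit u (A v) x :=
  (h.units_zpow_right x).apply_apply v

theorem zpowOrbit_add_one (v : M) (x : ℤ) :
    zpowOrbit u v (x + 1) = zpowOrbit u ((u : M →L[R] M) v) x := by
  rw [zpowOrbit, zpowOrbit, zpow_add_one, Units.val_mul, mul_apply_eq_comp]

theorem zpowOrbit_sub_one_of_apply_eq {v w : M} (h : (u : M →L[R] M) w = v) (x : ℤ) :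
    zpowOrbit u v (x - 1) = zpowOrbit u w x := by
  rw [← h, ← zpowOrbit_add_one, sub_add_cancel]

theorem zpowOrbit_neg {M : Type*} [TopologicalSpace M] [AddCommGroup M] [Module R M]
    {u : (M →L[R] M)ˣ} (v : M) (x : ℤ) : zpowOrbit u (-v) x = -zpowOrbit u v x :=
  map_neg _ v

end ZpowOrbit

section Span

variable {R M ι : Type*} [Semiring R] [AddCommMonoid M] [Module R M]

theorem apply_mem_span_range_union_left (f g : ι → M) (i : ι) :
    f i ∈ span R (range f ∪ range g) :=
  subset_span (Or.inl ⟨i, rfl⟩)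

theorem apply_mem_span_range_union_right (f g : ι → M) (i : ι) :
    g i ∈ span R (range f ∪ range g) :=
  subset_span (Or.inr ⟨i, rfl⟩)

end Span

section ClosedSpan

variable {R M ι : Type*} [Semiring R] [TopologicalSpace M] [AddCommMonoid M] [Module R M]
  [ContinuousConstSMul R M] [ContinuousAdd M]

theorem map_mem_topologicalClosure_span (A : M →L[R] M) {s : Set M}
    (hs : MapsTo A s (span R s)) {v : M} (hv : v ∈ (span R s).topologicalClosure) :
    A v ∈ (span R s).topologicalClosure :=
  map_mem_closure A.continuous hv fun _ hw =>
    (span_le (p := (span R s).comap (A : M →ₗ[R] M))).mpr hs hw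

theorem map_mem_topologicalClosure_span_range_union (A : M →L[R] M) {f g : ι → M}
    (hf : ∀ i, A (f i) ∈ span R (range f ∪ range g))
    (hg : ∀ i, A (g i) ∈ span R (range f ∪ range g)) {v : M}
    (hv : v ∈ (span R (range f ∪ range g)).topologicalClosure) :
    A v ∈ (span R (range f ∪ range g)).topologicalClosure :=
  map_mem_topologicalClosure_span A (mapsTo_union.mpr ⟨mapsTo_range_iff.mpr hf,
    mapsTo_range_iff.mpr hg⟩) hv

end ClosedSpan

section TwistedShift

variable {R : Type*} [Ring R] [Algebra ℂ R]

/-- The operator `T = X + iσY`, written as `π₊V + π₋V'` with `π± = (1 ± σ)/2`. -/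
noncomputable def twistedShift (σ V V' : R) : R := (2 : ℂ)⁻¹ • (V + V' + σ * (V - V'))

theorem add_I_smul_mul_eq_twistedShift (σ V V' : R) :
    (2 : ℂ)⁻¹ • (V + V') + Complex.I • (σ * ((2 * Complex.I)⁻¹ • (V - V'))) =
      twistedShift σ V V' := by
  have hI : Complex.I * (2 * Complex.I)⁻¹ = (2 : ℂ)⁻¹ := by
    field_simp
  rw [twistedShift, mul_smul_comm, smul_smul, hI, smul_add (2 : ℂ)⁻¹ (V + V')]

theorem Commute.twistedShift_right {A σ V V' : R} (hσ : Commute A σ) (hV : Commute A V)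
    (hV' : Commute A V') : Commute A (twistedShift σ V V') :=
  ((hV.add_right hV').add_right (hσ.mul_right (hV.sub_right hV'))).smul_right _

end TwistedShift

/-- The relations (QW1)–(QW3), with `V'` in the role of `V⁻¹`. -/
structure IsQuantumWalk {R : Type*} [Ring R] (V V' W σ : R) : Prop where
  V'_mul_V : V' * V = 1
  V_mul_V' : V * V' = 1
  W_mul_W : W * W = -1
  V_mul_W : V * W = W * V'
  σ_mul_W_add_W_mul_σ : σ * W + W * σ = 0
  commute_σ_V : Commute σ V

namespace IsQuantumWalk

section Ring

variable {R : Type*} [Ring R] {V V' W σ : R}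

theorem commute_V_V' (hQW : IsQuantumWalk V V' W σ) : Commute V V' :=
  hQW.V_mul_V'.trans hQW.V'_mul_V.symm

theorem commute_σ_V' (hQW : IsQuantumWalk V V' W σ) : Commute σ V' :=
  Commute.units_inv_right (u := ⟨V, V', hQW.V_mul_V', hQW.V'_mul_V⟩) hQW.commute_σ_V

theorem W_mul_V (hQW : IsQuantumWalk V V' W σ) : W * V = V' * W := by
  calc W * V = V' * (V * W) * V := by rw [← mul_assoc, hQW.V'_mul_V, one_mul]
    _ = V' * W := by rw [hQW.V_mul_W, mul_assoc, mul_assoc, hQW.V'_mul_V, mul_one]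

theorem commute_V_twistedShift [Algebra ℂ R] (hQW : IsQuantumWalk V V' W σ) :
    Commute V (twistedShift σ V V') :=
  hQW.commute_σ_V.symm.twistedShift_right (Commute.refl V) hQW.commute_V_V'

theorem commute_σ_twistedShift [Algebra ℂ R] (hQW : IsQuantumWalk V V' W σ) :
    Commute σ (twistedShift σ V V') :=
  (Commute.refl σ).twistedShift_right hQW.commute_σ_V hQW.commute_σ_V'

theorem commute_W_twistedShift [Algebra ℂ R] (hQW : IsQuantumWalk V V' W σ) :
    Commute W (twistedShift σ V V') := by
  refine Commute.smul_right ?_ _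
  calc W * (V + V' + σ * (V - V')) = W * V + W * V' + W * σ * (V - V') := by noncomm_ring
    _ = W * V + W * V' - σ * (W * V - W * V') := by
        rw [eq_neg_of_add_eq_zero_right hQW.σ_mul_W_add_W_mul_σ]
        noncomm_ring
    _ = (V + V' + σ * (V - V')) * W := by
        rw [hQW.W_mul_V, ← hQW.V_mul_W]
        noncomm_ring

end Ring

end IsQuantumWalk

section Eigenvectors

variable {E : Type*} [NormedAddCommGroup E] [NormedSpace ℂ E] {σ V V' : E →L[ℂ] E} {v : E}

theorem twistedShift_apply_of_apply_eq_self (hV : Commute σ V) (hV' : Commute σ V')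
    (hv : σ v = v) : twistedShift σ V V' v = V v := by
  simp only [twistedShift, smul_apply, add_apply, mul_apply_eq_comp, sub_apply, map_sub,
    hV.apply_apply, hV'.apply_apply, hv]
  module

theorem twistedShift_apply_of_apply_eq_neg (hV : Commute σ V) (hV' : Commute σ V')
    (hv : σ v = -v) : twistedShift σ V V' v = V' v := by
  simp only [twistedShift, smul_apply, add_apply, mul_apply_eq_comp, sub_apply, map_sub,
    hV.apply_apply, hV'.apply_apply, hv, map_neg]
  module

end Eigenvectors

namespace IsQuantumWalk

variable {E : Type*} [NormedAddCommGroup E] [NormedSpace ℂ E] {V V' W σ : E →L[ℂ] E} {e : E}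
  {Tu : (E →L[ℂ] E)ˣ}

theorem V'_apply_V (hQW : IsQuantumWalk V V' W σ) (v : E) : V' (V v) = v := by
  rw [← mul_apply_eq_comp, hQW.V'_mul_V, one_apply_eq_self]

theorem W_apply_W (hQW : IsQuantumWalk V V' W σ) (v : E) : W (W v) = -v := by
  rw [← mul_apply_eq_comp, hQW.W_mul_W, neg_apply, one_apply_eq_self]

theorem σ_apply_V_W (hQW : IsQuantumWalk V V' W σ) (he : σ e = e) :
    σ (V (W e)) = -V (W e) := by
  rw [hQW.commute_σ_V.apply_apply, ← mul_apply_eq_comp σ W,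
    eq_neg_of_add_eq_zero_left hQW.σ_mul_W_add_W_mul_σ, neg_apply, mul_apply_eq_comp, he,
    map_neg]

theorem twistedShift_apply_V_W (hQW : IsQuantumWalk V V' W σ) (he : σ e = e) :
    twistedShift σ V V' (V (W e)) = W e := by
  rw [twistedShift_apply_of_apply_eq_neg hQW.commute_σ_V hQW.commute_σ_V' (hQW.σ_apply_V_W he),
    hQW.V'_apply_V]

theorem twistedShift_apply_V_V_W (hQW : IsQuantumWalk V V' W σ) (he : σ e = e) :
    twistedShift σ V V' (V (V (W e))) = V (W e) := by
  have h : σ (V (V (W e))) = -V (V (W e)) := by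
    rw [hQW.commute_σ_V.apply_apply, hQW.σ_apply_V_W he, map_neg]
  rw [twistedShift_apply_of_apply_eq_neg hQW.commute_σ_V hQW.commute_σ_V' h, hQW.V'_apply_V]

theorem V_apply_zpowOrbit_self (hQW : IsQuantumWalk V V' W σ)
    (hTu : (Tu : E →L[ℂ] E) = twistedShift σ V V') (he : σ e = e) (x : ℤ) :
    V (zpowOrbit Tu e x) = zpowOrbit Tu e (x + 1) := by
  rw [(hTu ▸ hQW.commute_V_twistedShift : Commute V Tu).apply_zpowOrbit, zpowOrbit_add_one, hTu,
    twistedShift_apply_of_apply_eq_self hQW.commute_σ_V hQW.commute_σ_V' he]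

theorem V_apply_zpowOrbit_V_W (hQW : IsQuantumWalk V V' W σ)
    (hTu : (Tu : E →L[ℂ] E) = twistedShift σ V V') (he : σ e = e) (x : ℤ) :
    V (zpowOrbit Tu (V (W e)) x) = zpowOrbit Tu (V (W e)) (x - 1) := by
  rw [(hTu ▸ hQW.commute_V_twistedShift : Commute V Tu).apply_zpowOrbit,
    zpowOrbit_sub_one_of_apply_eq (hTu ▸ hQW.twistedShift_apply_V_V_W he)]

theorem W_apply_zpowOrbit_self (hQW : IsQuantumWalk V V' W σ)
    (hTu : (Tu : E →L[ℂ] E) = twistedShift σ V V') (he : σ e = e) (x : ℤ) :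
    W (zpowOrbit Tu e x) = zpowOrbit Tu (V (W e)) (x + 1) := by
  rw [(hTu ▸ hQW.commute_W_twistedShift : Commute W Tu).apply_zpowOrbit, zpowOrbit_add_one, hTu,
    hQW.twistedShift_apply_V_W he]

theorem W_apply_zpowOrbit_V_W (hQW : IsQuantumWalk V V' W σ)
    (hTu : (Tu : E →L[ℂ] E) = twistedShift σ V V') (he : σ e = e) (x : ℤ) :
    W (zpowOrbit Tu (V (W e)) x) = -zpowOrbit Tu e (x - 1) := by
  rw [← hQW.W_apply_W (zpowOrbit Tu e (x - 1)), hQW.W_apply_zpowOrbit_self hTu he,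
    sub_add_cancel]

theorem V'_apply_zpowOrbit_self (hQW : IsQuantumWalk V V' W σ)
    (hTu : (Tu : E →L[ℂ] E) = twistedShift σ V V') (he : σ e = e) (x : ℤ) :
    V' (zpowOrbit Tu e x) = zpowOrbit Tu e (x - 1) := by
  rw [← hQW.V'_apply_V (zpowOrbit Tu e (x - 1)), hQW.V_apply_zpowOrbit_self hTu he,
    sub_add_cancel]

theorem V'_apply_zpowOrbit_V_W (hQW : IsQuantumWalk V V' W σ)
    (hTu : (Tu : E →L[ℂ] E) = twistedShift σ V V') (he : σ e = e) (x : ℤ) :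
    V' (zpowOrbit Tu (V (W e)) x) = zpowOrbit Tu (V (W e)) (x + 1) := by
  rw [← hQW.V'_apply_V (zpowOrbit Tu (V (W e)) (x + 1)), hQW.V_apply_zpowOrbit_V_W hTu he,
    add_sub_cancel_right]

theorem σ_apply_zpowOrbit_self (hQW : IsQuantumWalk V V' W σ)
    (hTu : (Tu : E →L[ℂ] E) = twistedShift σ V V') (he : σ e = e) (x : ℤ) :
    σ (zpowOrbit Tu e x) = zpowOrbit Tu e x := by
  rw [(hTu ▸ hQW.commute_σ_twistedShift : Commute σ Tu).apply_zpowOrbit, he]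

theorem σ_apply_zpowOrbit_V_W (hQW : IsQuantumWalk V V' W σ)
    (hTu : (Tu : E →L[ℂ] E) = twistedShift σ V V') (he : σ e = e) (x : ℤ) :
    σ (zpowOrbit Tu (V (W e)) x) = -zpowOrbit Tu (V (W e)) x := by
  rw [(hTu ▸ hQW.commute_σ_twistedShift : Commute σ Tu).apply_zpowOrbit, hQW.σ_apply_V_W he,
    zpowOrbit_neg]

end IsQuantumWalk

theorem qw_invariant_subspace {H : Type*} [NormedAddCommGroup H] [InnerProductSpace ℂ H]
    [CompleteSpace H]
    (V W σ X Y T Pp ε : H →L[ℂ] H)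
    (hVu : adjoint V ∘L V = 1 ∧ V ∘L adjoint V = 1)
    (hWu : adjoint W ∘L W = 1 ∧ W ∘L adjoint W = 1)
    (hQW1 : W ∘L W = -1)
    (hQW2 : V ∘L W = W ∘L adjoint V)
    (hQW3W : σ ∘L W + W ∘L σ = 0)
    (hQW3V : σ ∘L V - V ∘L σ = 0)
    (hQW4 : adjoint σ = σ)
    (hX : X = (2 : ℂ)⁻¹ • (V + adjoint V))
    (hY : Y = (2 * Complex.I)⁻¹ • (V - adjoint V))
    (hT : T = X + Complex.I • (σ ∘L Y))
    (hPp : Pp = (2 : ℂ)⁻¹ • (1 + σ))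
    (hε : ε = V ∘L W)
    (e : H) (hePp : Pp e = e)
    (Tu : (H →L[ℂ] H)ˣ) (hTu : (Tu : H →L[ℂ] H) = T)
    (e1 e2 : ℤ → H)
    (he1 : ∀ x : ℤ, e1 x = ((Tu ^ x : (H →L[ℂ] H)ˣ) : H →L[ℂ] H) e)
    (he2 : ∀ x : ℤ, e2 x = ((Tu ^ x : (H →L[ℂ] H)ˣ) : H →L[ℂ] H) (ε e)) :
    (∀ x : ℤ, V (e1 x) = e1 (x + 1)) ∧
    (∀ x : ℤ, V (e2 x) = e2 (x - 1)) ∧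
    (∀ x : ℤ, W (e1 x) = e2 (x + 1)) ∧
    (∀ x : ℤ, W (e2 x) = -e1 (x - 1)) ∧
    (∀ v ∈ (Submodule.span ℂ (Set.range e1 ∪ Set.range e2)).topologicalClosure,
      V v ∈ (Submodule.span ℂ (Set.range e1 ∪ Set.range e2)).topologicalClosure ∧
      W v ∈ (Submodule.span ℂ (Set.range e1 ∪ Set.range e2)).topologicalClosure ∧
      σ v ∈ (Submodule.span ℂ (Set.range e1 ∪ Set.range e2)).topologicalClosure ∧
      adjoint V v ∈ (Submodule.span ℂ (Set.range e1 ∪ Set.range e2)).topologicalClosure ∧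
      adjoint W v ∈ (Submodule.span ℂ (Set.range e1 ∪ Set.range e2)).topologicalClosure ∧
      adjoint σ v ∈ (Submodule.span ℂ (Set.range e1 ∪ Set.range e2)).topologicalClosure) := by
  have hQW : IsQuantumWalk V (adjoint V) W σ :=
    ⟨hVu.1, hVu.2, hQW1, hQW2, hQW3W, sub_eq_zero.mp hQW3V⟩
  have hTu' : (Tu : H →L[ℂ] H) = twistedShift σ V (adjoint V) := by
    rw [hTu, hT, hX, hY]
    exact add_I_smul_mul_eq_twistedShift σ V (adjoint V)
  have he : σ e = e := by
    rw [hPp, smul_apply, add_apply, one_apply_eq_self] at hePp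
    linear_combination (norm := module) (2 : ℂ) • hePp
  have hW' : adjoint W = -W :=
    left_inv_eq_right_inv hWu.1 (by rw [mul_neg, hQW.W_mul_W, neg_neg])
  subst hε
  obtain rfl : e1 = zpowOrbit Tu e := funext he1
  obtain rfl : e2 = zpowOrbit Tu (V (W e)) := funext he2
  have hVe1 := hQW.V_apply_zpowOrbit_self hTu' he
  have hVe2 := hQW.V_apply_zpowOrbit_V_W hTu' he
  have hWe1 := hQW.W_apply_zpowOrbit_self hTu' he
  have hWe2 := hQW.W_apply_zpowOrbit_V_W hTu' he
  refine ⟨hVe1, hVe2, hWe1, hWe2, fun v hv => ⟨?_, ?_, ?_, ?_, ?_, ?_⟩⟩ <;>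
    refine map_mem_topologicalClosure_span_range_union _ (fun x => ?_) (fun x => ?_) hv <;>
    simp only [hVe1, hVe2, hWe1, hWe2, hQW.σ_apply_zpowOrbit_self hTu' he,
      hQW.σ_apply_zpowOrbit_V_W hTu' he, hQW.V'_apply_zpowOrbit_self hTu' he,
      hQW.V'_apply_zpowOrbit_V_W hTu' he, hW', hQW4, neg_apply, neg_neg, neg_mem_iff,
      apply_mem_span_range_union_left, apply_mem_span_range_union_right]
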